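/- For every k ≥ 1 and σ ∈ {0,1}^{k-1}, T_k(0,σ) = T_k(1,1-σ) ≥ h_{k-1}(σ), where T_k(τ) = Trace(M_k(τ)) for the Farey matrix product M_k and h is the number-theoretical spin chain function. -/
import Mathlib


open Matrix

namespace Farey

def A : Matrix (Fin 2) (Fin 2) ℤ := !![1, 0; 1, 1]
def B : Matrix (Fin 2) (Fin 2) ℤ := !![1, 1; 0, 1]

/-- The Farey spin chain matrix product: `M 0 = 1`,
`M (k+1) σ = A^(1-σ_(k+1)) B^(σ_(k+1)) * M k (σ_1,…,σ_k)`. -/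
def M : (k : ℕ) → (Fin k → Bool) → Matrix (Fin 2) (Fin 2) ℤ
  | 0, _ => 1
  | k + 1, σ => (if σ (Fin.last k) then B else A) * M k (fun i => σ i.castSucc)

/-- The canonical energy numerator of the number-theoretical spin chain:
`h 0 = 1`, `h (k+1) (σ, s) = h k σ + s * h k (1-σ)`. -/
def h : (k : ℕ) → (Fin k → Bool) → ℕ
  | 0, _ => 1
  | k + 1, σ =>
      h k (fun i => σ i.castSucc) +
        if σ (Fin.last k) then h k (fun i => !σ i.castSucc) else 0

def J : Matrix (Fin 2) (Fin 2) ℤ := !![0, 1; 1, 0]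

lemma A_J : A * J = J * B := by
  simp [A, B, J, Matrix.mul_fin_two]

lemma B_J : B * J = J * A := by
  simp [A, B, J, Matrix.mul_fin_two]

lemma J_J : J * J = 1 := by
  simp [J, Matrix.mul_fin_two]
  ext i j
  fin_cases i <;> fin_cases j <;> simp

lemma M_not (k : ℕ) (σ : Fin k → Bool) :
    M k (fun i => !σ i) = J * M k σ * J := by
  induction k with
  | zero =>
    show (1 : Matrix (Fin 2) (Fin 2) ℤ) = J * 1 * J
    rw [mul_one, J_J]
  | succ k ih =>
    show (if !σ (Fin.last k) then B else A) * M k (fun i => !σ i.castSucc)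
        = J * ((if σ (Fin.last k) then B else A) * M k (fun i => σ i.castSucc)) * J
    have := ih (fun i => σ i.castSucc)
    cases hb : σ (Fin.last k) <;> simp [hb, this, ← mul_assoc, A_J, B_J]

lemma M_nonneg (k : ℕ) (σ : Fin k → Bool) : ∀ i j : Fin 2, 0 ≤ M k σ i j := by
  induction k with
  | zero =>
    intro i j
    show (0:ℤ) ≤ (1 : Matrix (Fin 2) (Fin 2) ℤ) i j
    rw [Matrix.one_apply]
    split <;> norm_num
  | succ k ih =>
    intro i j
    show (0:ℤ) ≤ ((if σ (Fin.last k) then B else A) * M k (fun i => σ i.castSucc)) i j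
    rw [Matrix.mul_apply, Fin.sum_univ_two]
    have hC : ∀ a b : Fin 2, (0:ℤ) ≤ (if σ (Fin.last k) then B else A) a b := by
      intro a b
      split <;> fin_cases a <;> fin_cases b <;> norm_num [A, B]
    exact add_nonneg (mul_nonneg (hC i 0) (ih _ 0 j)) (mul_nonneg (hC i 1) (ih _ 1 j))

lemma h_eq (k : ℕ) (σ : Fin k → Bool) :
    (h k σ : ℤ) = M k σ 0 0 + M k σ 0 1 := by
  induction k with
  | zero =>
    show ((1:ℕ) : ℤ) = (1 : Matrix (Fin 2) (Fin 2) ℤ) 0 0 + (1 : Matrix (Fin 2) (Fin 2) ℤ) 0 1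
    simp
  | succ k ih =>
    show ((h k (fun i => σ i.castSucc) +
        if σ (Fin.last k) then h k (fun i => !σ i.castSucc) else 0 : ℕ) : ℤ)
      = ((if σ (Fin.last k) then B else A) * M k (fun i => σ i.castSucc)) 0 0
        + ((if σ (Fin.last k) then B else A) * M k (fun i => σ i.castSucc)) 0 1
    set P := M k (fun i => σ i.castSucc) with hP
    have hnot : M k (fun i => !σ i.castSucc) = J * P * J := M_not k _
    cases hb : σ (Fin.last k) <;>
      simp only [if_true, if_false, Nat.cast_add, Nat.cast_zero, add_zero]
    · rw [Matrix.mul_apply, Fin.sum_univ_two, Matrix.mul_apply, Fin.sum_univ_two]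
      simp [A]
      exact ih _
    · rw [Matrix.mul_apply, Fin.sum_univ_two, Matrix.mul_apply, Fin.sum_univ_two]
      simp only [B]
      have h1 := ih (fun i => σ i.castSucc)
      have h2 := ih (fun i => !σ i.castSucc)
      rw [hnot] at h2
      have e1 : (J * P * J) 0 0 = P 1 1 := by
        simp only [Matrix.mul_apply, Fin.sum_univ_two, J,
          Matrix.cons_val', Matrix.cons_val_zero, Matrix.cons_val_one,
          Matrix.head_cons, Matrix.head_fin_const, Matrix.empty_val',
          Matrix.cons_val_fin_one, Matrix.of_apply]
        ring
      have e2 : (J * P * J) 0 1 = P 1 0 := by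
        simp only [Matrix.mul_apply, Fin.sum_univ_two, J,
          Matrix.cons_val', Matrix.cons_val_zero, Matrix.cons_val_one,
          Matrix.head_cons, Matrix.head_fin_const, Matrix.empty_val',
          Matrix.cons_val_fin_one, Matrix.of_apply]
        ring
      rw [e1, e2] at h2
      rw [h1, h2]
      norm_num [B]
      ring

lemma M_cons (k : ℕ) (τ : Bool) (σ : Fin k → Bool) :
    M (k + 1) (Fin.cons τ σ) = M k σ * (if τ then B else A) := by
  induction k with
  | zero =>
    show (if (Fin.cons τ σ : Fin 1 → Bool) (Fin.last 0) then B else A) * M 0 _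
        = 1 * (if τ then B else A)
    simp [M]
  | succ k ih =>
    have hlast : (Fin.cons τ σ : Fin (k + 2) → Bool) (Fin.last (k + 1)) = σ (Fin.last k) := by
      rw [show (Fin.last (k+1)) = Fin.succ (Fin.last k) from rfl, Fin.cons_succ]
    have hinit : (fun i : Fin (k+1) => (Fin.cons τ σ : Fin (k + 2) → Bool) i.castSucc)
        = Fin.cons τ (fun i => σ i.castSucc) := by
      funext i
      refine Fin.cases ?_ ?_ i
      · rfl
      · intro j
        rw [show (Fin.succ j).castSucc = Fin.succ j.castSucc from rfl,
          Fin.cons_succ, Fin.cons_succ]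
    show (if (Fin.cons τ σ : Fin (k+2) → Bool) (Fin.last (k+1)) then B else A)
        * M (k+1) (fun i => (Fin.cons τ σ : Fin (k+2) → Bool) i.castSucc)
      = ((if σ (Fin.last k) then B else A) * M k (fun i => σ i.castSucc)) * (if τ then B else A)
    rw [hlast, hinit, ih, mul_assoc]

/-- `T_{k+1}(0,σ) = T_{k+1}(1,1-σ) ≥ h_k(σ)`. -/
theorem trace_M_cons (k : ℕ) (σ : Fin k → Bool) :
    (M (k + 1) (Fin.cons false σ)).trace
        = (M (k + 1) (Fin.cons true (fun i => !σ i))).trace ∧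
      (h k σ : ℤ) ≤ (M (k + 1) (Fin.cons false σ)).trace := by
  rw [M_cons, M_cons, M_not, if_pos rfl, if_neg (by simp)]
  set P := M k σ with hP
  constructor
  · rw [Matrix.trace_fin_two, Matrix.trace_fin_two]
    simp only [Matrix.mul_apply, Fin.sum_univ_two, A, B, J,
      Matrix.cons_val', Matrix.cons_val_zero, Matrix.cons_val_one,
      Matrix.head_cons, Matrix.head_fin_const, Matrix.empty_val',
      Matrix.cons_val_fin_one, Matrix.of_apply]
    ring
  · rw [Matrix.trace_fin_two]
    have hh := h_eq k σ
    have h11 := M_nonneg k σ 1 1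
    simp only [Matrix.mul_apply, Fin.sum_univ_two, A,
      Matrix.cons_val', Matrix.cons_val_zero, Matrix.cons_val_one,
      Matrix.head_cons, Matrix.head_fin_const, Matrix.empty_val',
      Matrix.cons_val_fin_one, Matrix.of_apply]
    linarith

end Farey
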